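/- arXiv:2410.22291 — 4 statements merged into one kernel-verified Lean document; each statement's English description precedes it below -/
import Mathlib

section
/- Let M ∈ ℝ^{n×n} be Hurwitz and let k ≥ 1. Then the k-way Lyapunov matrix L_k(M) ∈ ℝ^{n^k × n^k} is invertible; consequently, for every b ∈ ℝ^{n^k} the linear system L_k(M)ᵀ v = b has a unique solution v ∈ ℝ^{n^k}. -/
open Finset Matrix

/-- The `k`-way Lyapunov matrix `L_k(M) = Σ_{i=1}^k I ⊗ ⋯ ⊗ M ⊗ ⋯ ⊗ I`,
with rows and columns indexed by multi-indices in `{1,…,n}^k`. -/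
def lyapK {n : ℕ} (k : ℕ) (M : Matrix (Fin n) (Fin n) ℝ) :
    Matrix (Fin k → Fin n) (Fin k → Fin n) ℝ :=
  Matrix.of fun m m' =>
    ∑ i : Fin k, M (m i) (m' i) * ∏ j ∈ univ.erase i, (if m j = m' j then (1 : ℝ) else 0)

/-- A real square matrix is Hurwitz if every eigenvalue (over `ℂ`) has strictly
negative real part. -/
def IsHurwitz {n : ℕ} (M : Matrix (Fin n) (Fin n) ℝ) : Prop :=
  ∀ μ ∈ spectrum ℂ (M.map (algebraMap ℝ ℂ)), μ.re < 0

section Aux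

open Polynomial

variable {ι κ : Type*} [Fintype ι] [DecidableEq ι] [Fintype κ] [DecidableEq κ]

noncomputable def lyapC {n : ℕ} (k : ℕ) (N : Matrix (Fin n) (Fin n) ℂ) :
    Matrix (Fin k → Fin n) (Fin k → Fin n) ℂ :=
  Matrix.of fun m m' =>
    ∑ i : Fin k, N (m i) (m' i) * ∏ j ∈ Finset.univ.erase i, (if m j = m' j then (1 : ℂ) else 0)

lemma myCharpolyEval (A : Matrix ι ι ℂ) (μ : ℂ) :
    A.charpoly.eval μ = (scalar ι μ - A).det := by
  rw [Matrix.charpoly, _root_.eval_det, matPolyEquiv_charmatrix]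
  simp

lemma myAlgebraMapEq (μ : ℂ) : (algebraMap ℂ (Matrix ι ι ℂ)) μ = scalar ι μ := rfl

lemma mySpecIff (A : Matrix ι ι ℂ) (μ : ℂ) :
    μ ∈ spectrum ℂ A ↔ A.charpoly.IsRoot μ := by
  rw [spectrum.mem_iff, Matrix.isUnit_iff_isUnit_det, isUnit_iff_ne_zero, not_not,
    Polynomial.IsRoot, myCharpolyEval, myAlgebraMapEq]

lemma mySpecTranspose (A : Matrix ι ι ℂ) : spectrum ℂ Aᵀ = spectrum ℂ A := by
  ext μ
  rw [spectrum.mem_iff, spectrum.mem_iff]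
  have h : (algebraMap ℂ (Matrix ι ι ℂ)) μ - Aᵀ = ((algebraMap ℂ (Matrix ι ι ℂ)) μ - A)ᵀ := by
    rw [Matrix.transpose_sub, myAlgebraMapEq]
    congr 1
    exact (Matrix.diagonal_transpose _).symm
  rw [h, Matrix.isUnit_transpose]

lemma mySylvester (A : Matrix ι ι ℂ) (B : Matrix κ κ ℂ)
    (hAB : ∀ α ∈ spectrum ℂ A, ∀ β ∈ spectrum ℂ B, α + β ≠ 0)
    (X : Matrix ι κ ℂ) (hX : A * X + X * B = 0) : X = 0 := by
  have hc : A * X = X * (-B) := by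
    rw [Matrix.mul_neg, eq_neg_iff_add_eq_zero]
    exact hX
  have hpow : ∀ m : ℕ, A ^ m * X = X * (-B) ^ m := by
    intro m
    induction m with
    | zero => simp
    | succ m ih =>
      rw [pow_succ, pow_succ, Matrix.mul_assoc, hc, ← Matrix.mul_assoc, ih, Matrix.mul_assoc]
  have hp : ∀ p : ℂ[X], (aeval A p) * X = X * (aeval (-B) p) := by
    intro p
    induction p using Polynomial.induction_on' with
    | add p q hp hq => rw [map_add, map_add, Matrix.add_mul, Matrix.mul_add, hp, hq]
    | monomial m a =>
      simp only [aeval_monomial, Algebra.algebraMap_eq_smul_one, Matrix.smul_mul,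
        Matrix.mul_smul, Matrix.one_mul, hpow m]
  have hCH := hp A.charpoly
  rw [Matrix.aeval_self_charpoly, Matrix.zero_mul] at hCH
  -- show `aeval (-B) A.charpoly` is a unit
  set p := A.charpoly with hpdef
  have hsplit : p = (Multiset.map (fun a => Polynomial.X - C a) p.roots).prod :=
    (IsAlgClosed.splits _).eq_prod_roots_of_monic A.charpoly_monic
  have hlist : p = ((p.roots.toList.map (fun a => Polynomial.X - C a)).prod) := by
    conv_lhs => rw [hsplit, ← Multiset.coe_toList p.roots]
    rw [Multiset.map_coe, Multiset.prod_coe]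
  have hunit : IsUnit (aeval (-B) p) := by
    rw [Matrix.isUnit_iff_isUnit_det, isUnit_iff_ne_zero]
    have heq : (aeval (-B) p) = ((p.roots.toList.map (fun a => -B - scalar κ a)).prod) := by
      conv_lhs => rw [hlist]
      rw [map_list_prod, List.map_map]
      congr 1
      apply List.map_congr_left
      intro a _
      simp [Function.comp, sub_eq_add_neg, myAlgebraMapEq]
    rw [heq, ← Matrix.coe_detMonoidHom, map_list_prod, List.map_map]
    apply List.prod_ne_zero
    intro h0
    simp only [List.mem_map, Function.comp_apply, Matrix.coe_detMonoidHom] at h0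
    obtain ⟨a, ha, hd⟩ := h0
    have ha' : a ∈ p.roots := by rwa [← Multiset.mem_toList]
    have haspec : a ∈ spectrum ℂ A := (mySpecIff A a).2 ((mem_roots'.1 ha').2)
    have hnegspec : -a ∈ spectrum ℂ B := by
      rw [spectrum.mem_iff, Matrix.isUnit_iff_isUnit_det, isUnit_iff_ne_zero, not_not,
        myAlgebraMapEq]
      rw [← hd]
      congr 1
      simp [sub_eq_add_neg, add_comm]
    exact hAB a haspec (-a) hnegspec (by ring)
  obtain ⟨u, hu⟩ := hunit
  have h0 : X * (aeval (-B) p) = 0 := hCH.symm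
  have key : (aeval (-B) p) * (↑u⁻¹ : Matrix κ κ ℂ) = 1 := by
    rw [← hu]; exact u.mul_inv
  calc X = X * ((aeval (-B) p) * (↑u⁻¹ : Matrix κ κ ℂ)) := by rw [key, Matrix.mul_one]
    _ = (X * (aeval (-B) p)) * (↑u⁻¹ : Matrix κ κ ℂ) := by rw [Matrix.mul_assoc]
    _ = 0 := by rw [h0, Matrix.zero_mul]

lemma lyapC_apply' {n k : ℕ} (N : Matrix (Fin n) (Fin n) ℂ) (m m' : Fin k → Fin n) :
    lyapC k N m m' =
      ∑ i : Fin k, N (m i) (m' i) * (if ∀ j, j ≠ i → m j = m' j then (1 : ℂ) else 0) := by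
  unfold lyapC
  simp only [Matrix.of_apply]
  congr 1
  funext i
  congr 1
  rw [Finset.prod_boole]
  congr 1
  simp only [eq_iff_iff]
  constructor
  · intro h j hj; exact h j (Finset.mem_erase.2 ⟨hj, Finset.mem_univ j⟩)
  · intro h j hj; exact h j (Finset.mem_erase.1 hj).1

lemma boole_and (P Q : Prop) [Decidable P] [Decidable Q] :
    (if P ∧ Q then (1 : ℂ) else 0) = (if P then (1 : ℂ) else 0) * (if Q then (1 : ℂ) else 0) := by
  by_cases hP : P <;> by_cases hQ : Q <;> simp [hP, hQ]

lemma lyapC_succ_apply {n k : ℕ} (N : Matrix (Fin n) (Fin n) ℂ) (x y : Fin n)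
    (t t' : Fin k → Fin n) :
    lyapC (k + 1) N (Fin.cons x t) (Fin.cons y t') =
      N x y * (if t = t' then (1 : ℂ) else 0) +
        (if x = y then (1 : ℂ) else 0) * lyapC k N t t' := by
  rw [lyapC_apply', Fin.sum_univ_succ]
  congr 1
  · simp only [Fin.cons_zero]
    congr 1
    congr 1
    simp only [eq_iff_iff]
    constructor
    · intro h
      funext j
      have := h j.succ (Fin.succ_ne_zero j)
      simpa using this
    · rintro rfl j hj
      obtain ⟨j', rfl⟩ := Fin.exists_succ_eq.2 hj
      simp
  · rw [lyapC_apply', Finset.mul_sum]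
    congr 1
    funext i
    simp only [Fin.cons_succ]
    have hcond : (∀ j, j ≠ i.succ → (Fin.cons x t : Fin (k+1) → Fin n) j = (Fin.cons y t' : Fin (k+1) → Fin n) j) ↔
        (x = y ∧ ∀ j', j' ≠ i → t j' = t' j') := by
      constructor
      · intro h
        refine ⟨by simpa using h 0 (Fin.succ_ne_zero i).symm, fun j' hj' => ?_⟩
        have := h j'.succ (by simpa using hj')
        simpa using this
      · rintro ⟨hxy, h⟩ j hj
        rcases Fin.eq_zero_or_eq_succ j with rfl | ⟨j', rfl⟩
        · simpa using hxy
        · have : j' ≠ i := by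
            intro hji; exact hj (by rw [hji])
          simpa using h j' this
    rw [if_congr hcond rfl rfl, boole_and]
    ring

lemma lyapC_mulVec {n k : ℕ} (N : Matrix (Fin n) (Fin n) ℂ)
    (w : (Fin (k + 1) → Fin n) → ℂ) (x : Fin n) (t : Fin k → Fin n) :
    (lyapC (k + 1) N *ᵥ w) (Fin.cons x t) =
      (∑ y, N x y * w (Fin.cons y t)) +
        ∑ t', lyapC k N t t' * w (Fin.cons x t') := by
  simp only [Matrix.mulVec, dotProduct]
  rw [← Fintype.sum_equiv (Fin.consEquiv (fun _ : Fin (k + 1) => Fin n))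
    (fun p : Fin n × (Fin k → Fin n) =>
      lyapC (k + 1) N (Fin.cons x t) (Fin.cons p.1 p.2) * w (Fin.cons p.1 p.2))
    (fun m' => lyapC (k + 1) N (Fin.cons x t) m' * w m') (fun p => rfl)]
  rw [Fintype.sum_prod_type]

  have : ∀ (y : Fin n) (t' : Fin k → Fin n),
      lyapC (k + 1) N (Fin.cons x t) (Fin.cons y t') * w (Fin.cons y t') =
        N x y * (if t = t' then (1:ℂ) else 0) * w (Fin.cons y t') +
          (if x = y then (1:ℂ) else 0) * lyapC k N t t' * w (Fin.cons y t') := by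
    intro y t'
    rw [lyapC_succ_apply, add_mul]
  simp only [this, Finset.sum_add_distrib]
  congr 1
  · congr 1
    funext y
    simp [mul_ite, ite_mul, Finset.sum_ite_eq]
  · rw [Finset.sum_comm]
    congr 1
    funext t'
    simp [ite_mul, Finset.sum_ite_eq']

lemma lyapC_spec {n : ℕ} (N : Matrix (Fin n) (Fin n) ℂ) :
    ∀ (k : ℕ) (μ : ℂ), μ ∈ spectrum ℂ (lyapC k N) →
      ∃ α : Fin k → ℂ, (∀ i, α i ∈ spectrum ℂ N) ∧ μ = ∑ i, α i := by
  intro k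
  induction k with
  | zero =>
    intro μ hμ
    refine ⟨fun i => i.elim0, fun i => i.elim0, ?_⟩
    rw [spectrum.mem_iff, Matrix.isUnit_iff_isUnit_det, isUnit_iff_ne_zero, not_not] at hμ
    have hz : lyapC 0 N = 0 := by
      ext m m'
      simp [lyapC]
    rw [hz, sub_zero, myAlgebraMapEq, Matrix.scalar_apply, Matrix.det_diagonal] at hμ
    simpa using hμ
  | succ k ih =>
    intro μ hμ
    -- decompose μ = α + β
    have hstep : ∃ α ∈ spectrum ℂ N, ∃ β ∈ spectrum ℂ (lyapC k N), μ = α + β := by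
      by_contra hcon
      push_neg at hcon
      apply spectrum.notMem_iff.2 ?_ hμ
      rw [myAlgebraMapEq, ← Matrix.mulVec_injective_iff_isUnit]
      have hker : ∀ w : (Fin (k + 1) → Fin n) → ℂ,
          (scalar _ μ - lyapC (k + 1) N) *ᵥ w = 0 → w = 0 := by
        intro w hw
        have hLw : lyapC (k + 1) N *ᵥ w = μ • w := by
          rw [Matrix.sub_mulVec] at hw
          have h1 : scalar _ μ *ᵥ w = μ • w := by
            funext m
            rw [Matrix.scalar_apply, Matrix.mulVec_diagonal]
            simp
          rw [h1] at hw
          exact (sub_eq_zero.mp hw).symm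
        set L := lyapC k N with hLdef
        set X : Matrix (Fin n) (Fin k → Fin n) ℂ := Matrix.of fun x t => w (Fin.cons x t)
          with hXdef
        have hXeq : N * X + X * (Lᵀ - scalar _ μ) = 0 := by
          ext x t
          have hkey := congrFun hLw (Fin.cons x t)
          rw [lyapC_mulVec] at hkey
          simp only [Pi.smul_apply, smul_eq_mul] at hkey
          simp only [Matrix.add_apply, Matrix.mul_apply, Matrix.sub_apply,
            Matrix.transpose_apply, Matrix.zero_apply, Matrix.of_apply, Matrix.scalar_apply,
            Matrix.diagonal_apply, hXdef]
          have hsum : ∑ t', w (Fin.cons x t') * (L t t' - if t' = t then μ else 0)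
              = (∑ t', L t t' * w (Fin.cons x t')) - μ * w (Fin.cons x t) := by
            simp only [mul_sub]
            rw [Finset.sum_sub_distrib]
            congr 1
            · exact Finset.sum_congr rfl fun t' _ => mul_comm _ _
            · simp [mul_ite, Finset.sum_ite_eq', mul_comm]
          rw [hsum]
          linear_combination hkey
        have hAB : ∀ α ∈ spectrum ℂ N, ∀ β ∈ spectrum ℂ (Lᵀ - scalar _ μ), α + β ≠ 0 := by
          intro α hα β hβ h0
          have hβ' : β + μ ∈ spectrum ℂ L := by
            rw [← mySpecTranspose]
            rw [spectrum.mem_iff] at hβ ⊢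
            intro hU
            apply hβ
            have : (algebraMap ℂ (Matrix (Fin k → Fin n) (Fin k → Fin n) ℂ)) β -
                (Lᵀ - scalar _ μ) = (algebraMap ℂ _) (β + μ) - Lᵀ := by
              rw [myAlgebraMapEq, myAlgebraMapEq, map_add]
              abel
            rw [this]
            exact hU
          exact hcon α hα (β + μ) hβ'
            (show μ = α + (β + μ) by rw [show α + (β + μ) = (α + β) + μ from by ring, h0, zero_add])
        have hX0 : X = 0 := mySylvester N (Lᵀ - scalar _ μ) hAB X hXeq
        funext m
        have hwm : w m = X (m 0) (Fin.tail m) := by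
          rw [hXdef]
          simp only [Matrix.of_apply, Fin.cons_self_tail]
        rw [hwm, hX0]
        simp
      intro w1 w2 h12
      have := hker (w1 - w2) (by rw [Matrix.mulVec_sub, h12, sub_self])
      exact sub_eq_zero.mp this
    obtain ⟨α, hα, β, hβ, rfl⟩ := hstep
    obtain ⟨γ, hγ, rfl⟩ := ih β hβ
    refine ⟨Fin.cons α γ, ?_, ?_⟩
    · intro i
      rcases Fin.eq_zero_or_eq_succ i with rfl | ⟨j, rfl⟩
      · simpa using hα
      · simpa using hγ j
    · rw [Fin.sum_univ_succ]
      simp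

end Aux


lemma lyapK_map {n k : ℕ} (M : Matrix (Fin n) (Fin n) ℝ) :
    (lyapK k M).map (algebraMap ℝ ℂ) = lyapC k (M.map (algebraMap ℝ ℂ)) := by
  ext m m'
  simp only [lyapK, lyapC, Matrix.map_apply, Matrix.of_apply, map_sum, _root_.map_mul,
    map_prod, apply_ite (algebraMap ℝ ℂ), _root_.map_one, _root_.map_zero]

/-- If `M` is Hurwitz, the `k`-way Lyapunov matrix `L_k(M)` is invertible; consequently,
for every `b` the linear system `L_k(M)ᵀ v = b` has a unique solution. -/
theorem lyapK_isUnit_of_hurwitz {n k : ℕ} (hk : 1 ≤ k)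
    (M : Matrix (Fin n) (Fin n) ℝ) (hM : IsHurwitz M) :
    IsUnit (lyapK k M) ∧
      ∀ b : (Fin k → Fin n) → ℝ, ∃! v : (Fin k → Fin n) → ℝ, (lyapK k M)ᵀ *ᵥ v = b := by
  set N := M.map (algebraMap ℝ ℂ) with hN
  have h0 : (0 : ℂ) ∉ spectrum ℂ (lyapC k N) := by
    intro h
    obtain ⟨α, hαs, hsum⟩ := lyapC_spec N k 0 h
    have hre : ∀ i, (α i).re < 0 := fun i => hM _ (hαs i)
    haveI : Nonempty (Fin k) := ⟨⟨0, hk⟩⟩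
    have hlt : ∑ i, (α i).re < 0 := by
      have := Finset.sum_lt_sum_of_nonempty (Finset.univ_nonempty)
        (fun i _ => hre i)
      simpa using this
    have : (0 : ℝ) = ∑ i, (α i).re := by
      have := congrArg Complex.re hsum
      simpa [Complex.re_sum] using this
    rw [← this] at hlt
    exact absurd hlt (lt_irrefl _)
  have hUC : IsUnit (lyapC k N) := (spectrum.zero_notMem_iff ℂ).mp h0
  have hdetC : (lyapC k N).det ≠ 0 := by
    rw [← isUnit_iff_ne_zero, ← Matrix.isUnit_iff_isUnit_det]
    exact hUC
  have hdetR : (lyapK k M).det ≠ 0 := by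
    intro hz
    apply hdetC
    rw [← lyapK_map,
      show (lyapK k M).map (algebraMap ℝ ℂ) = (algebraMap ℝ ℂ).mapMatrix (lyapK k M) from rfl,
      ← RingHom.map_det, hz, _root_.map_zero]
  have hUnit : IsUnit (lyapK k M) := by
    rw [Matrix.isUnit_iff_isUnit_det, isUnit_iff_ne_zero]
    exact hdetR
  refine ⟨hUnit, fun b => ?_⟩
  have hT : IsUnit (lyapK k M)ᵀ := (Matrix.isUnit_transpose _).2 hUnit
  have hTdet : IsUnit (lyapK k M)ᵀ.det := (Matrix.isUnit_iff_isUnit_det _).1 hT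
  refine ⟨(lyapK k M)ᵀ⁻¹ *ᵥ b, ?_, ?_⟩
  · show (lyapK k M)ᵀ *ᵥ ((lyapK k M)ᵀ⁻¹ *ᵥ b) = b
    rw [Matrix.mulVec_mulVec, Matrix.mul_nonsing_inv _ hTdet, Matrix.one_mulVec]
  · intro v hv
    have hinj : Function.Injective ((lyapK k M)ᵀ.mulVec) :=
      Matrix.mulVec_injective_iff_isUnit.2 hT
    apply hinj
    rw [hv, Matrix.mulVec_mulVec, Matrix.mul_nonsing_inv _ hTdet, Matrix.one_mulVec]
end

section
/- Let n, k ≥ 1, let v ∈ ℝ^{n^k}, let M ∈ ℝ^{n×n}, and let x ∈ ℝⁿ. Then Σ_{i=1}^k Σ_m v_m (Mx)_{m_i} ∏_{j≠i} x_{m_j} = Σ_{m,m'} v_m L_k(M)_{m,m'} (x^{⊗k})_{m'}, i.e., vᵀ[(I_n ⊗ x^{⊗(k−1)}) + (x ⊗ I_n ⊗ x^{⊗(k−2)}) + ⋯ + (x^{⊗(k−1)} ⊗ I_n)] M x = vᵀ L_k(M) x^{⊗k}. -/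
open Finset Matrix

/-- `vᵀ[(I ⊗ x^{⊗(k−1)}) + (x ⊗ I ⊗ x^{⊗(k−2)}) + ⋯ + (x^{⊗(k−1)} ⊗ I)] M x
    = vᵀ L_k(M) x^{⊗k}`. -/
theorem kWayLyapunov_collect {n k : ℕ} (hn : 1 ≤ n) (hk : 1 ≤ k)
    (v : (Fin k → Fin n) → ℝ) (M : Matrix (Fin n) (Fin n) ℝ) (x : Fin n → ℝ) :
    ∑ i : Fin k, ∑ m : Fin k → Fin n,
        v m * (M *ᵥ x) (m i) * ∏ j ∈ univ.erase i, x (m j)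
      = ∑ m : Fin k → Fin n, ∑ m' : Fin k → Fin n,
          v m * lyapK k M m m' * ∏ j, x (m' j) := by
  have key : ∀ (m : Fin k → Fin n) (i : Fin k),
      ∑ m' : Fin k → Fin n,
        (M (m i) (m' i) * ∏ j ∈ univ.erase i, (if m j = m' j then (1 : ℝ) else 0))
          * ∏ j, x (m' j)
      = (M *ᵥ x) (m i) * ∏ j ∈ univ.erase i, x (m j) := by
    intro m i
    have h0 : ∀ m' ∈ (univ : Finset (Fin k → Fin n)),
        m' ∉ Finset.image (Function.update m i) univ →
        (M (m i) (m' i) * ∏ j ∈ univ.erase i, (if m j = m' j then (1 : ℝ) else 0))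
          * ∏ j, x (m' j) = 0 := by
      intro m' _ hm'
      have : ∃ j, j ≠ i ∧ m j ≠ m' j := by
        by_contra h
        push_neg at h
        exact hm' (Finset.mem_image.mpr ⟨m' i, Finset.mem_univ _, by
          funext j
          rcases eq_or_ne j i with rfl | hj
          · simp
          · rw [Function.update_of_ne hj]
            exact h j hj⟩)
      obtain ⟨j, hji, hne⟩ := this
      rw [Finset.prod_eq_zero (Finset.mem_erase.mpr ⟨hji, Finset.mem_univ j⟩)
        (if_neg hne : (if m j = m' j then (1:ℝ) else 0) = 0)]
      ring
    have hinj : ∀ a ∈ (univ : Finset (Fin n)), ∀ b ∈ (univ : Finset (Fin n)),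
        Function.update m i a = Function.update m i b → a = b := by
      intro a _ b _ h
      have := congrFun h i
      simpa using this
    rw [← Finset.sum_subset (Finset.subset_univ _) h0, Finset.sum_image hinj]
    have hterm : ∀ a : Fin n,
        (M (m i) a * ∏ j ∈ univ.erase i,
            (if m j = Function.update m i a j then (1 : ℝ) else 0))
          * ∏ j, x (Function.update m i a j)
        = M (m i) a * x a * ∏ j ∈ univ.erase i, x (m j) := by
      intro a
      have h1 : ∏ j ∈ univ.erase i,
          (if m j = Function.update m i a j then (1 : ℝ) else 0) = 1 := by
        apply Finset.prod_eq_one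
        intro j hj
        rw [Function.update_of_ne (Finset.mem_erase.mp hj).1]
        simp
      have h2 : ∏ j, x (Function.update m i a j)
          = x a * ∏ j ∈ univ.erase i, x (m j) := by
        rw [← Finset.mul_prod_erase univ _ (Finset.mem_univ i), Function.update_self]
        congr 1
        apply Finset.prod_congr rfl
        intro j hj
        rw [Function.update_of_ne (Finset.mem_erase.mp hj).1]
      rw [h1, h2]; ring
    simp only [Function.update_self]
    rw [Finset.sum_congr rfl fun a _ => hterm a]
    rw [← Finset.sum_mul]
    simp [Matrix.mulVec, dotProduct]
  rw [Finset.sum_comm]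
  refine Finset.sum_congr rfl fun m _ => ?_
  simp_rw [lyapK, Matrix.of_apply, Finset.mul_sum, Finset.sum_mul]
  rw [Finset.sum_comm]
  refine Finset.sum_congr rfl fun i _ => ?_
  rw [mul_assoc, ← key m i, Finset.mul_sum]
  exact Finset.sum_congr rfl fun m' _ => by ring
end

section
/- Let n ≥ 1, i ≥ 1, p ≥ 1, let v ∈ ℝ^{n^i} be a symmetric coefficient vector, let F ∈ ℝ^{n × n^p} be a matrix whose rows are indexed by {1,…,n} and whose columns are indexed by multi-indices in {1,…,n}^p, and let x ∈ ℝⁿ. Then i · vᵀ ((F x^{⊗p}) ⊗ x^{⊗(i−1)}) = vᵀ L_i(F) x^{⊗(i+p−1)}; entrywise, i · Σ_m v_m (F x^{⊗p})_{m₁} ∏_{j=2}^i x_{m_j} = Σ_{t=1}^i Σ_m v_m (F x^{⊗p})_{m_t} ∏_{j≠t} x_{m_j}. -/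
open Finset

/-- A coefficient vector `v ∈ ℝ^{n^k}` (indexed by multi-indices) is *symmetric*
if the multilinear form it defines is invariant under permutations of its arguments. -/
def IsSymmetricCoeff {n k : ℕ} (v : (Fin k → Fin n) → ℝ) : Prop :=
  ∀ (a : Fin k → Fin n → ℝ) (σ : Equiv.Perm (Fin k)),
    ∑ m : Fin k → Fin n, v m * ∏ j, a j (m j)
      = ∑ m : Fin k → Fin n, v m * ∏ j, a (σ j) (m j)

/-- For a symmetric coefficient vector `v ∈ ℝ^{n^i}` and `F ∈ ℝ^{n×n^p}`,
`i · vᵀ((F x^{⊗p}) ⊗ x^{⊗(i−1)}) = vᵀ L_i(F) x^{⊗(i+p−1)}`, written entrywise. -/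
theorem symmetric_kWayLyapunov_rect {n i p : ℕ} (hn : 1 ≤ n) (hi : 1 ≤ i) (hp : 1 ≤ p)
    (v : (Fin i → Fin n) → ℝ) (hv : IsSymmetricCoeff v)
    (F : Matrix (Fin n) (Fin p → Fin n) ℝ) (x : Fin n → ℝ)
    (Fx : Fin n → ℝ)
    (hFx : ∀ a, Fx a = ∑ s : Fin p → Fin n, F a s * ∏ r, x (s r)) :
    (i : ℝ) * ∑ m : Fin i → Fin n,
        v m * Fx (m ⟨0, hi⟩) * ∏ j ∈ univ.erase ⟨0, hi⟩, x (m j)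
      = ∑ t : Fin i, ∑ m : Fin i → Fin n,
          v m * Fx (m t) * ∏ j ∈ univ.erase t, x (m j) := by
  set z : Fin i := ⟨0, hi⟩ with hz
  have e1 : ∀ (t' : Fin i) (m : Fin i → Fin n),
      (∏ j, (if j = t' then Fx else x) (m j))
        = Fx (m t') * ∏ j ∈ univ.erase t', x (m j) := by
    intro t' m
    rw [← Finset.mul_prod_erase univ _ (mem_univ t')]
    simp only [if_pos rfl]
    congr 1
    exact Finset.prod_congr rfl fun j hj => by
      rw [if_neg (Finset.ne_of_mem_erase hj)]
  have key : ∀ t : Fin i,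
      (∑ m : Fin i → Fin n, v m * Fx (m t) * ∏ j ∈ univ.erase t, x (m j))
        = ∑ m : Fin i → Fin n, v m * Fx (m z) * ∏ j ∈ univ.erase z, x (m j) := by
    intro t
    have h := hv (fun j => if j = z then Fx else x) (Equiv.swap z t)
    have hswap : ∀ j : Fin i, (Equiv.swap z t j = z) ↔ j = t := by
      intro j
      constructor
      · intro hj
        have := congrArg (Equiv.swap z t) hj
        simpa [Equiv.swap_apply_left, Equiv.swap_apply_self] using this
      · rintro rfl; exact Equiv.swap_apply_right _ _
    have h2 : ∀ j : Fin i, (fun j => if j = z then Fx else x) (Equiv.swap z t j)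
        = if j = t then Fx else x := by
      intro j
      show (if (Equiv.swap z t) j = z then Fx else x) = _
      by_cases hj : j = t
      · subst hj; simp [Equiv.swap_apply_right]
      · rw [if_neg (fun hc => hj ((hswap j).mp hc)), if_neg hj]
    simp only [h2, e1] at h
    calc ∑ m : Fin i → Fin n, v m * Fx (m t) * ∏ j ∈ univ.erase t, x (m j)
        = ∑ m : Fin i → Fin n, v m * (Fx (m t) * ∏ j ∈ univ.erase t, x (m j)) :=
          Finset.sum_congr rfl fun m _ => by ring
      _ = ∑ m : Fin i → Fin n, v m * (Fx (m z) * ∏ j ∈ univ.erase z, x (m j)) := h.symm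
      _ = ∑ m : Fin i → Fin n, v m * Fx (m z) * ∏ j ∈ univ.erase z, x (m j) :=
          Finset.sum_congr rfl fun m _ => by ring
  rw [Finset.sum_congr rfl (fun t _ => key t), Finset.sum_const, card_univ,
    Fintype.card_fin, nsmul_eq_mul]
end

section
/- Let f : ℝⁿ → ℝⁿ be continuously differentiable with f(0) = 0 and set A := Df(0) ∈ ℝ^{n×n}. Let g : ℝⁿ → ℝ^{n×m} be continuous and set B := g(0). Let Q ∈ ℝ^{n×n} be symmetric, let R ∈ ℝ^{m×m} be symmetric and invertible with R⁻¹ symmetric, and let q : ℝⁿ → ℝ satisfy q(x)/‖x‖² → 0 as x → 0. Let V : ℝⁿ → ℝ be twice continuously differentiable on a neighborhood of 0 with V(0) = 0 and ∇V(0) = 0, and set V₂ := ∇²V(0) (the Hessian of V at 0). If the Hamilton–Jacobi–Bellman equation ∇V(x)ᵀ f(x) − (1/2) ∇V(x)ᵀ g(x) R⁻¹ g(x)ᵀ ∇V(x) + (1/2) xᵀ Q x + (1/2) q(x) = 0 holds for all x in some neighborhood of 0, then V₂ satisfies the algebraic Riccati equation AᵀV₂ + V₂A − V₂ B R⁻¹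 Bᵀ V₂ + Q = 0. -/
open Matrix Filter

private lemma symm_quadform_zero {n : ℕ} (M : Matrix (Fin n) (Fin n) ℝ) (hM : Mᵀ = M)
    (h : ∀ v, v ⬝ᵥ (M *ᵥ v) = 0) : M = 0 := by
  ext i j
  have hji : M j i = M i j := by
    conv_lhs => rw [← hM]
    simp [Matrix.transpose_apply]
  have h1 := h (Pi.single i 1 + Pi.single j 1)
  have h2 := h (Pi.single i 1)
  have h3 := h (Pi.single j 1)
  simp only [Matrix.mulVec_add, add_dotProduct, dotProduct_add,
    Matrix.mulVec_single_one, single_dotProduct, Matrix.col_apply, mul_one, one_mul] at h1 h2 h3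
  simp only [Matrix.zero_apply]
  linarith [h1, h2, h3, hji]

private lemma scale_cancel {t a b c d : ℝ} (ht : t ≠ 0)
    (h : a - 1 / 2 * b + 1 / 2 * (t * (t * c)) + 1 / 2 * d = 0) :
    t⁻¹ * (t⁻¹ * a) - 1 / 2 * (t⁻¹ * (t⁻¹ * b)) + 1 / 2 * c
      + 1 / 2 * (t⁻¹ * (t⁻¹ * d)) = 0 := by
  have e : t⁻¹ * (t⁻¹ * a) - 1 / 2 * (t⁻¹ * (t⁻¹ * b)) + 1 / 2 * c
      + 1 / 2 * (t⁻¹ * (t⁻¹ * d))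
      = t⁻¹ * (t⁻¹ * (a - 1 / 2 * b + 1 / 2 * (t * (t * c)) + 1 / 2 * d)) := by
    field_simp
  rw [e, h, mul_zero, mul_zero]

private lemma pi_sum_single {n : ℕ} (v : Fin n → ℝ) :
    v = ∑ a, v a • (Pi.single a 1 : Fin n → ℝ) := by
  conv_lhs => rw [← Finset.univ_sum_single v]
  congr 1; ext a j
  simp [Pi.single_apply]

private lemma tendsto_dotProduct' {α : Type*} {k : ℕ} {l : Filter α}
    {u w : α → (Fin k → ℝ)} {a b : Fin k → ℝ}
    (hu : Tendsto u l (nhds a)) (hw : Tendsto w l (nhds b)) :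
    Tendsto (fun t => u t ⬝ᵥ w t) l (nhds (a ⬝ᵥ b)) := by
  simp only [dotProduct]
  exact tendsto_finset_sum _ fun i _ => (hu.apply_nhds i).mul (hw.apply_nhds i)

private lemma tendsto_mulVec' {α : Type*} {k l' : ℕ} {l : Filter α}
    {M : α → Matrix (Fin k) (Fin l') ℝ} {u : α → (Fin l' → ℝ)}
    {N : Matrix (Fin k) (Fin l') ℝ} {b : Fin l' → ℝ}
    (hM : Tendsto M l (nhds N)) (hu : Tendsto u l (nhds b)) :
    Tendsto (fun t => M t *ᵥ u t) l (nhds (N *ᵥ b)) := by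
  rw [tendsto_pi_nhds]
  intro i
  simp only [Matrix.mulVec, dotProduct]
  exact tendsto_finset_sum _ fun j _ =>
    ((hM.apply_nhds i).apply_nhds j).mul (hu.apply_nhds j)

/-- If `V` is a `C²` solution of the Hamilton–Jacobi–Bellman equation near the origin,
with `V(0) = 0` and `∇V(0) = 0`, then the Hessian `V₂ = ∇²V(0)` satisfies the algebraic
Riccati equation `AᵀV₂ + V₂A − V₂BR⁻¹BᵀV₂ + Q = 0`, where `A = Df(0)` and `B = g(0)`. -/
theorem hjb_hessian_satisfies_riccati {n m : ℕ}
    (f : (Fin n → ℝ) → (Fin n → ℝ)) (hf : ContDiff ℝ 1 f) (hf0 : f 0 = 0)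
    (g : (Fin n → ℝ) → Matrix (Fin n) (Fin m) ℝ) (hg : Continuous g)
    (Q : Matrix (Fin n) (Fin n) ℝ) (hQ : Q.IsSymm)
    (R : Matrix (Fin m) (Fin m) ℝ) (hRs : R.IsSymm) (hR : IsUnit R)
    (hRi : (R⁻¹).IsSymm)
    (q : (Fin n → ℝ) → ℝ)
    (hq : Tendsto (fun x : Fin n → ℝ => q x / ‖x‖ ^ 2) (nhdsWithin 0 {0}ᶜ) (nhds 0))
    (V : (Fin n → ℝ) → ℝ) (hV : ContDiffAt ℝ 2 V 0)
    (hV0 : V 0 = 0) (hV1 : fderiv ℝ V 0 = 0)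
    (A : Matrix (Fin n) (Fin n) ℝ)
    (hA : ∀ a b, A a b = fderiv ℝ f 0 (Pi.single b 1) a)
    (B : Matrix (Fin n) (Fin m) ℝ) (hB : B = g 0)
    (V₂ : Matrix (Fin n) (Fin n) ℝ)
    (hV₂ : ∀ a b, V₂ a b
      = fderiv ℝ (fun x => fderiv ℝ V x (Pi.single b 1)) 0 (Pi.single a 1))
    (hHJB : ∀ᶠ x in nhds (0 : Fin n → ℝ),
      (fun a => fderiv ℝ V x (Pi.single a 1)) ⬝ᵥ f x
        - (1 / 2) * ((fun a => fderiv ℝ V x (Pi.single a 1)) ⬝ᵥ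
            ((g x * R⁻¹ * (g x)ᵀ) *ᵥ (fun a => fderiv ℝ V x (Pi.single a 1))))
        + (1 / 2) * (x ⬝ᵥ (Q *ᵥ x)) + (1 / 2) * q x = 0) :
    Aᵀ * V₂ + V₂ * A - V₂ * B * R⁻¹ * Bᵀ * V₂ + Q = 0 := by
  -- Setup: second derivative of V
  have hVd : ContDiffAt ℝ 1 (fderiv ℝ V) 0 := hV.fderiv_right (by norm_num)
  have hD : DifferentiableAt ℝ (fderiv ℝ V) 0 := hVd.differentiableAt one_ne_zero
  set D := fderiv ℝ (fderiv ℝ V) 0 with hDdef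
  have hsymm : ∀ v w, D v w = D w v := hV.isSymmSndFDerivAt (by simp [minSmoothness_of_isRCLikeNormedField])
  have hV₂D : ∀ a b, V₂ a b = D (Pi.single a 1) (Pi.single b 1) := by
    intro a b
    rw [hV₂ a b]
    have h1 : HasFDerivAt (fun x => fderiv ℝ V x (Pi.single b 1))
        ((ContinuousLinearMap.apply ℝ ℝ (Pi.single b 1 : Fin n → ℝ)).comp D) 0 :=
      (ContinuousLinearMap.apply ℝ ℝ (Pi.single b 1 : Fin n → ℝ)).hasFDerivAt.comp 0
        hD.hasFDerivAt
    rw [h1.fderiv]; rfl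
  have hV₂symm : V₂ᵀ = V₂ := by
    ext i j
    rw [Matrix.transpose_apply, hV₂D, hV₂D, hsymm]
  -- the gradient map and its derivative
  set E : ((Fin n → ℝ) →L[ℝ] ℝ) →L[ℝ] (Fin n → ℝ) :=
    ContinuousLinearMap.pi (fun a => ContinuousLinearMap.apply ℝ ℝ (Pi.single a 1)) with hE
  have hφder : HasFDerivAt (fun x => (fun a => fderiv ℝ V x (Pi.single a 1)))
      (E.comp D) 0 := E.hasFDerivAt.comp 0 hD.hasFDerivAt
  have hL : ∀ v, (E.comp D) v = V₂ *ᵥ v := by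
    intro v
    funext b
    have h1 : (E.comp D) v b = D v (Pi.single b 1) := rfl
    rw [h1]
    conv_lhs => rw [pi_sum_single v]
    rw [map_sum]
    simp only [_root_.map_smul]
    rw [ContinuousLinearMap.sum_apply]
    simp only [ContinuousLinearMap.smul_apply, ← hV₂D]
    rw [Matrix.mulVec, dotProduct]
    congr 1; funext a
    have hba : V₂ b a = V₂ a b := by rw [hV₂D, hV₂D, hsymm]
    rw [hba, smul_eq_mul, mul_comm]
  have hφ0 : (fun a => fderiv ℝ V 0 (Pi.single a 1)) = (0 : Fin n → ℝ) := by
    funext a; rw [hV1]; rfl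
  -- the derivative of f at 0 is A
  have hfd : HasFDerivAt f (fderiv ℝ f 0) 0 :=
    ((hf.differentiable one_ne_zero) 0).hasFDerivAt
  have hAv : ∀ v, fderiv ℝ f 0 v = A *ᵥ v := by
    intro v
    conv_lhs => rw [pi_sum_single v]
    rw [map_sum]
    funext a
    rw [Finset.sum_apply]
    simp only [_root_.map_smul, Pi.smul_apply, smul_eq_mul]
    rw [Matrix.mulVec, dotProduct]
    congr 1; funext b
    rw [hA a b, mul_comm]
  -- key quadratic identity from the HJB equation along rays
  have key : ∀ v : Fin n → ℝ, (V₂ *ᵥ v) ⬝ᵥ (A *ᵥ v)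
      - (1 / 2) * ((V₂ *ᵥ v) ⬝ᵥ ((B * R⁻¹ * Bᵀ) *ᵥ (V₂ *ᵥ v)))
      + (1 / 2) * (v ⬝ᵥ (Q *ᵥ v)) = 0 := by
    intro v
    by_cases hv : v = 0
    · subst hv; simp
    -- limit of rescaled gradient along the ray t ↦ t • v
    have hsv : HasDerivAt (fun t : ℝ => t • v) v 0 := by
      simpa using (hasDerivAt_id (0 : ℝ)).smul_const v
    have hw : Tendsto (fun t : ℝ => t⁻¹ • (fun a => fderiv ℝ V (t • v) (Pi.single a 1)))
        (nhdsWithin 0 {0}ᶜ) (nhds (V₂ *ᵥ v)) := by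
      have h0 : HasFDerivAt (fun x => (fun a => fderiv ℝ V x (Pi.single a 1)))
          (E.comp D) ((fun t : ℝ => t • v) 0) := by simpa using hφder
      have hcomp : HasDerivAt
          (fun t : ℝ => (fun a => fderiv ℝ V (t • v) (Pi.single a 1))) ((E.comp D) v) 0 := by
        have := h0.comp_hasDerivAt 0 hsv; exact this
      rw [← hL v]
      refine (hasDerivAt_iff_tendsto_slope.1 hcomp).congr (fun t => ?_)
      simp [slope, hφ0]
    -- limit of rescaled f along the ray
    have hfv : Tendsto (fun t : ℝ => t⁻¹ • f (t • v)) (nhdsWithin 0 {0}ᶜ)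
        (nhds (A *ᵥ v)) := by
      have h0 : HasFDerivAt f (fderiv ℝ f 0) ((fun t : ℝ => t • v) 0) := by simpa using hfd
      have hcomp : HasDerivAt (fun t : ℝ => f (t • v)) (fderiv ℝ f 0 v) 0 :=
        h0.comp_hasDerivAt 0 hsv
      rw [← hAv v]
      refine (hasDerivAt_iff_tendsto_slope.1 hcomp).congr (fun t => ?_)
      simp [slope, hf0]
    -- limit of the matrix term
    have hGt : Tendsto (fun t : ℝ => g (t • v) * R⁻¹ * (g (t • v))ᵀ) (nhdsWithin 0 {0}ᶜ)
        (nhds (B * R⁻¹ * Bᵀ)) := by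
      have hcont : Continuous (fun x : Fin n → ℝ => g x * R⁻¹ * (g x)ᵀ) :=
        (hg.matrix_mul continuous_const).matrix_mul hg.matrix_transpose
      have hray : Tendsto (fun t : ℝ => t • v) (nhdsWithin 0 {0}ᶜ) (nhds 0) := by
        have h2 : Continuous (fun t : ℝ => t • v) := continuous_id.smul continuous_const
        exact ((by simpa using h2.tendsto 0 : Tendsto (fun t : ℝ => t • v) (nhds 0)
          (nhds 0))).mono_left nhdsWithin_le_nhds
      have := (hcont.tendsto 0).comp hray
      simpa [hB, Function.comp_def] using this
    -- limit of the rescaled state penalty q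
    have hqt : Tendsto (fun t : ℝ => t⁻¹ * (t⁻¹ * q (t • v))) (nhdsWithin 0 {0}ᶜ)
        (nhds 0) := by
      have hmap : Tendsto (fun t : ℝ => t • v) (nhdsWithin 0 {0}ᶜ)
          (nhdsWithin 0 {(0 : Fin n → ℝ)}ᶜ) := by
        rw [tendsto_nhdsWithin_iff]
        constructor
        · have h2 : Continuous (fun t : ℝ => t • v) := continuous_id.smul continuous_const
          exact ((by simpa using h2.tendsto 0 : Tendsto (fun t : ℝ => t • v) (nhds 0)
            (nhds 0))).mono_left nhdsWithin_le_nhds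
        · filter_upwards [self_mem_nhdsWithin] with t ht
          simp only [Set.mem_compl_iff, Set.mem_singleton_iff] at *
          intro h
          rcases smul_eq_zero.1 h with h | h
          · exact ht h
          · exact hv h
      have h1 : Tendsto (fun t : ℝ => q (t • v) / ‖t • v‖ ^ 2 * ‖v‖ ^ 2)
          (nhdsWithin 0 {0}ᶜ) (nhds 0) := by
        simpa using (hq.comp hmap).mul_const (‖v‖ ^ 2)
      refine h1.congr' ?_
      filter_upwards [self_mem_nhdsWithin] with t ht
      simp only [Set.mem_compl_iff, Set.mem_singleton_iff] at ht
      have hvn : ‖v‖ ≠ 0 := norm_ne_zero_iff.2 hv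
      have hns : ‖t • v‖ ^ 2 = t ^ 2 * ‖v‖ ^ 2 := by
        rw [norm_smul, mul_pow]; simp [sq_abs]
      rw [hns]
      field_simp
    -- the rescaled HJB expression
    set w : Fin n → ℝ := V₂ *ᵥ v with hwdef
    have hFlim : Tendsto (fun t : ℝ =>
        (t⁻¹ • (fun a => fderiv ℝ V (t • v) (Pi.single a 1))) ⬝ᵥ (t⁻¹ • f (t • v))
        - (1 / 2) * ((t⁻¹ • (fun a => fderiv ℝ V (t • v) (Pi.single a 1))) ⬝ᵥ
            ((g (t • v) * R⁻¹ * (g (t • v))ᵀ) *ᵥ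
              (t⁻¹ • (fun a => fderiv ℝ V (t • v) (Pi.single a 1)))))
        + (1 / 2) * (v ⬝ᵥ (Q *ᵥ v)) + (1 / 2) * (t⁻¹ * (t⁻¹ * q (t • v))))
        (nhdsWithin 0 {0}ᶜ)
        (nhds (w ⬝ᵥ (A *ᵥ v) - (1 / 2) * (w ⬝ᵥ ((B * R⁻¹ * Bᵀ) *ᵥ w))
          + (1 / 2) * (v ⬝ᵥ (Q *ᵥ v)) + (1 / 2) * 0)) := by
      exact (((tendsto_dotProduct' hw hfv).sub
        ((tendsto_const_nhds.mul (tendsto_dotProduct' hw (tendsto_mulVec' hGt hw))))).add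
        tendsto_const_nhds).add (tendsto_const_nhds.mul hqt)
    have hFzero : ∀ᶠ t : ℝ in nhdsWithin 0 {0}ᶜ,
        (t⁻¹ • (fun a => fderiv ℝ V (t • v) (Pi.single a 1))) ⬝ᵥ (t⁻¹ • f (t • v))
        - (1 / 2) * ((t⁻¹ • (fun a => fderiv ℝ V (t • v) (Pi.single a 1))) ⬝ᵥ
            ((g (t • v) * R⁻¹ * (g (t • v))ᵀ) *ᵥ
              (t⁻¹ • (fun a => fderiv ℝ V (t • v) (Pi.single a 1)))))
        + (1 / 2) * (v ⬝ᵥ (Q *ᵥ v)) + (1 / 2) * (t⁻¹ * (t⁻¹ * q (t • v))) = 0 := by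
      have hray : Tendsto (fun t : ℝ => t • v) (nhds 0) (nhds 0) := by
        have h2 : Continuous (fun t : ℝ => t • v) := continuous_id.smul continuous_const
        simpa using h2.tendsto 0
      have hHJBt : ∀ᶠ t : ℝ in nhds 0,
          (fun a => fderiv ℝ V (t • v) (Pi.single a 1)) ⬝ᵥ f (t • v)
          - (1 / 2) * ((fun a => fderiv ℝ V (t • v) (Pi.single a 1)) ⬝ᵥ
              ((g (t • v) * R⁻¹ * (g (t • v))ᵀ) *ᵥ
                (fun a => fderiv ℝ V (t • v) (Pi.single a 1))))
          + (1 / 2) * ((t • v) ⬝ᵥ (Q *ᵥ (t • v))) + (1 / 2) * q (t • v) = 0 :=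
        hray.eventually hHJB
      filter_upwards [hHJBt.filter_mono nhdsWithin_le_nhds, self_mem_nhdsWithin] with t hE0 ht
      simp only [Set.mem_compl_iff, Set.mem_singleton_iff] at ht
      set u : Fin n → ℝ := (fun a => fderiv ℝ V (t • v) (Pi.single a 1)) with hu
      have e1 : (t⁻¹ • u) ⬝ᵥ (t⁻¹ • f (t • v)) = t⁻¹ * (t⁻¹ * (u ⬝ᵥ f (t • v))) := by
        rw [smul_dotProduct, dotProduct_smul, smul_eq_mul, smul_eq_mul]
      have e2 : (t⁻¹ • u) ⬝ᵥ ((g (t • v) * R⁻¹ * (g (t • v))ᵀ) *ᵥ (t⁻¹ • u))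
          = t⁻¹ * (t⁻¹ * (u ⬝ᵥ ((g (t • v) * R⁻¹ * (g (t • v))ᵀ) *ᵥ u))) := by
        rw [Matrix.mulVec_smul, smul_dotProduct, dotProduct_smul,
          smul_eq_mul, smul_eq_mul]
      have e3 : (t • v) ⬝ᵥ (Q *ᵥ (t • v)) = t * (t * (v ⬝ᵥ (Q *ᵥ v))) := by
        rw [Matrix.mulVec_smul, smul_dotProduct, dotProduct_smul,
          smul_eq_mul, smul_eq_mul]
      rw [e3] at hE0
      rw [e1, e2]
      exact scale_cancel ht hE0
    have : w ⬝ᵥ (A *ᵥ v) - (1 / 2) * (w ⬝ᵥ ((B * R⁻¹ * Bᵀ) *ᵥ w))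
        + (1 / 2) * (v ⬝ᵥ (Q *ᵥ v)) + (1 / 2) * 0 = 0 := by
      exact tendsto_nhds_unique hFlim (tendsto_const_nhds.congr'
        (hFzero.mono (fun t ht => ht.symm)))
    simpa using this
  -- final algebra: the quadratic form of the Riccati matrix vanishes
  apply symm_quadform_zero
  · simp only [Matrix.transpose_add, Matrix.transpose_sub, Matrix.transpose_mul,
      Matrix.transpose_transpose, hV₂symm, hQ.eq, hRi.eq, Matrix.mul_assoc]
    abel
  · intro v
    have hk := key v
    set w : Fin n → ℝ := V₂ *ᵥ v with hwdef
    have t1 : v ⬝ᵥ ((Aᵀ * V₂) *ᵥ v) = w ⬝ᵥ (A *ᵥ v) := by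
      rw [← Matrix.mulVec_mulVec, Matrix.dotProduct_mulVec, Matrix.vecMul_transpose,
        dotProduct_comm]
    have t2 : v ⬝ᵥ ((V₂ * A) *ᵥ v) = w ⬝ᵥ (A *ᵥ v) := by
      rw [← Matrix.mulVec_mulVec, Matrix.dotProduct_mulVec]
      congr 1
      rw [← hV₂symm, Matrix.vecMul_transpose]
    have t3 : v ⬝ᵥ ((V₂ * B * R⁻¹ * Bᵀ * V₂) *ᵥ v) = w ⬝ᵥ ((B * R⁻¹ * Bᵀ) *ᵥ w) := by
      have assoc1 : V₂ * B * R⁻¹ * Bᵀ * V₂ = V₂ * (B * R⁻¹ * Bᵀ) * V₂ := by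
        rw [Matrix.mul_assoc V₂ B R⁻¹, Matrix.mul_assoc V₂ (B * R⁻¹) Bᵀ]
      rw [assoc1, ← Matrix.mulVec_mulVec, ← Matrix.mulVec_mulVec,
        Matrix.dotProduct_mulVec]
      congr 1
      rw [← hV₂symm, Matrix.vecMul_transpose]
    rw [Matrix.add_mulVec, Matrix.sub_mulVec, Matrix.add_mulVec,
      dotProduct_add, dotProduct_sub, dotProduct_add,
      t1, t2, t3]
    linarith [hk]
end
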